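/- arXiv:2410.02341 — 3 statements merged into one kernel-verified Lean document; each statement's English description precedes it below -/
import Mathlib

section
/- (Trichotomy for the Kerr frequency potential; Lemma 6.1 of the paper.) Let (ξ_τ, ξ_φ, Λ) be an admissible triple with Λ > 0. Then the function r ↦ V(r) on the interval (r₊, ∞) satisfies at least one of the following: (i) V is strictly decreasing on (r₊, ∞); (ii) V has a unique critical point r_max in (r₊, ∞) and V(r_max) > V(r) for every r ∈ (r₊, ∞) with r ≠ r_max (a global maximum); (iii) V has exactly two critical points r_min < r_max in (r₊, ∞), V attains a local minimum at r_min and a local maximum at r_max. Moreover, every critical point of V in (r₊, ∞) at which V has a local maximum lies in (r₊, 8m], and in case (iii) one has ξ_τ² > V(r_min). -/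
open Real Set

noncomputable section

/-- The Kerr horizon function `Δ(r) = r² − 2mr + a²`. -/
def kerrDelta (m a r : ℝ) : ℝ := r ^ 2 - 2 * m * r + a ^ 2

/-- The larger root `r₊ = m + √(m² − a²)` of `Δ`. -/
def kerrRp (m a : ℝ) : ℝ := m + Real.sqrt (m ^ 2 - a ^ 2)

/-- The Kerr frequency potential `V`. -/
def kerrV (m a ξτ ξφ Λ r : ℝ) : ℝ :=
  (kerrDelta m a r * Λ ^ 2 - 4 * a * m * r * ξτ * ξφ - a ^ 2 * ξφ ^ 2) / (r ^ 2 + a ^ 2) ^ 2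

/-!
For `r > 0` one has `V'(r) = -2 Q(r) / (r² + a²)³` with a cubic `Q` of leading coefficient
`Λ² > 0` and `Q(0) = m a² (Λ² + 2 a ξτ ξφ) ≥ 0`. So `Q` has a root `t ≤ 0` and factors as
`Q(r) = Λ² (r - t) ((r - b)² + c)`; on `(r₊, ∞)` the sign of `V'` is that of `-((r - b)² + c)`.
Either `V' < 0` off at most one point (so `V` decreases), or `V' > 0` exactly between the roots
`b ± √(-c)`; the position of `r₊` relative to these roots then gives case (i), (ii) or (iii).
Admissibility makes every term of a decomposition of `Q(r)` nonnegative once `r ≥ 7m`, so all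
critical points lie below `7m`; in the third case `V(r_min) < V(r₊) = ξτ² - k₊²`.
-/

section Cubic

variable {c₃ c₂ c₁ c₀ : ℝ}

lemma exists_nonpos_cubic_neg (hc₃ : 0 < c₃) :
    ∃ x ≤ 0, c₃ * x ^ 3 + c₂ * x ^ 2 + c₁ * x + c₀ < 0 := by
  -- at `x = -K` the cubic is at most `-c₃ K²`
  set K := 1 + (|c₂| + |c₁| + |c₀|) / c₃
  have hK : 1 ≤ K := le_add_of_nonneg_right (by positivity)
  have hSK : |c₂| + |c₁| + |c₀| = c₃ * (K - 1) := by simp only [K]; field_simp; ring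
  refine ⟨-K, by linarith, ?_⟩
  have hKK : K ≤ K ^ 2 := by nlinarith
  nlinarith [le_abs_self c₂, neg_abs_le c₁, le_abs_self c₀, abs_nonneg c₁, abs_nonneg c₀,
    mul_le_mul_of_nonneg_left hKK (abs_nonneg c₁),
    mul_le_mul_of_nonneg_left (hK.trans hKK) (abs_nonneg c₀),
    mul_le_mul_of_nonneg_right (le_abs_self c₂) (sq_nonneg K)]

lemma exists_nonpos_cubic_root (hc₃ : 0 < c₃) (hc₀ : 0 ≤ c₀) :
    ∃ t ≤ 0, c₃ * t ^ 3 + c₂ * t ^ 2 + c₁ * t + c₀ = 0 := by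
  obtain ⟨x, hx, hfx⟩ := exists_nonpos_cubic_neg (c₂ := c₂) (c₁ := c₁) (c₀ := c₀) hc₃
  obtain ⟨t, ht, hft⟩ := intermediate_value_Icc hx (by fun_prop : Continuous fun y : ℝ =>
    c₃ * y ^ 3 + c₂ * y ^ 2 + c₁ * y + c₀).continuousOn ⟨hfx.le, by simpa using hc₀⟩
  exact ⟨t, ht.2, hft⟩

lemma exists_cubic_eq_mul_sq_add (hc₃ : 0 < c₃) (hc₀ : 0 ≤ c₀) :
    ∃ t ≤ 0, ∃ b c : ℝ, ∀ x,
      c₃ * x ^ 3 + c₂ * x ^ 2 + c₁ * x + c₀ = c₃ * (x - t) * ((x - b) ^ 2 + c) := by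
  obtain ⟨t, ht, hft⟩ := exists_nonpos_cubic_root (c₂ := c₂) (c₁ := c₁) hc₃ hc₀
  set b := -(c₂ + c₃ * t) / (2 * c₃)
  refine ⟨t, ht, b, (c₁ + c₂ * t + c₃ * t ^ 2) / c₃ - b ^ 2, fun x => ?_⟩
  simp only [b]
  field_simp
  linear_combination 4 * c₃ * hft

end Cubic

section SignPattern

variable {f f' : ℝ → ℝ} {p : ℝ}

lemma strictAntiOn_Ioi_of_hasDerivAt_neg_of_ne {b : ℝ}
    (hf : ∀ x ∈ Ioi p, HasDerivAt f (f' x) x) (hf' : ∀ x ∈ Ioi p, x ≠ b → f' x < 0) :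
    StrictAntiOn f (Ioi p) := by
  have anti : ∀ s ⊆ Ioi p, Convex ℝ s → b ∉ interior s → StrictAntiOn f s :=
    fun s hs hconv hb => strictAntiOn_of_deriv_neg hconv
      (fun x hx => (hf x (hs hx)).continuousAt.continuousWithinAt) fun x hx => by
        rw [(hf x (hs (interior_subset hx))).deriv]
        exact hf' x (hs (interior_subset hx)) (ne_of_mem_of_not_mem hx hb)
  rcases le_or_gt b p with hbp | hpb
  · exact anti _ subset_rfl (convex_Ioi p) (by simpa using hbp)
  · rw [← Ioc_union_Ici_eq_Ioi hpb]
    exact (anti _ Ioc_subset_Ioi_self (convex_Ioc p b) (by simp)).union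
      (anti _ (Ici_subset_Ioi.2 hpb) (convex_Ici b) (by simp))
      ⟨right_mem_Ioc.2 hpb, fun x hx => hx.2⟩ isLeast_Ici

lemma lt_of_hasDerivAt_pos_of_neg {s : ℝ} (hps : p < s) (hf : ∀ x ∈ Ioi p, HasDerivAt f (f' x) x)
    (hpos : ∀ x ∈ Ioo p s, 0 < f' x) (hneg : ∀ x ∈ Ioi s, f' x < 0) :
    ∀ x ∈ Ioi p, x ≠ s → f x < f s := by
  have hcont : ContinuousOn f (Ioi p) := fun x hx => (hf x hx).continuousAt.continuousWithinAt
  have hmono : StrictMonoOn f (Ioc p s) := strictMonoOn_of_deriv_pos (convex_Ioc p s)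
    (hcont.mono Ioc_subset_Ioi_self) fun x hx => by
      rw [interior_Ioc] at hx
      rw [(hf x hx.1).deriv]
      exact hpos x hx
  have hanti : StrictAntiOn f (Ici s) := strictAntiOn_of_deriv_neg (convex_Ici s)
    (hcont.mono (Ici_subset_Ioi.2 hps)) fun x hx => by
      rw [interior_Ici] at hx
      rw [(hf x (hps.trans hx)).deriv]
      exact hneg x hx
  intro x hx hxs
  rcases hxs.lt_or_gt with hlt | hgt
  · exact hmono ⟨hx, hlt.le⟩ ⟨hps, le_rfl⟩ hlt
  · exact hanti self_mem_Ici hgt.le hgt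

end SignPattern

section TwoRoots

variable {f g : ℝ → ℝ} {p s₁ s₂ : ℝ}

lemma deriv_eq_zero_iff_of_two_roots
    (hf : ∀ x ∈ Ici p, HasDerivAt f (-(g x * ((x - s₁) * (x - s₂)))) x)
    (hg : ∀ x ∈ Ioi p, 0 < g x) {x : ℝ} (hx : x ∈ Ioi p) :
    deriv f x = 0 ↔ x = s₁ ∨ x = s₂ := by
  rw [(hf x (Ioi_subset_Ici_self hx)).deriv, neg_eq_zero, mul_eq_zero, mul_eq_zero, sub_eq_zero,
    sub_eq_zero, or_iff_right (hg x hx).ne']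

lemma exists_unique_max_of_two_roots
    (hf : ∀ x ∈ Ici p, HasDerivAt f (-(g x * ((x - s₁) * (x - s₂)))) x)
    (hg : ∀ x ∈ Ioi p, 0 < g x) (hs₁ : s₁ ≤ p) (hs₂ : p < s₂) :
    ∃ rmax ∈ Ioi p, deriv f rmax = 0 ∧ (∀ r ∈ Ioi p, deriv f r = 0 → r = rmax) ∧
      ∀ r ∈ Ioi p, r ≠ rmax → f r < f rmax := by
  refine ⟨s₂, hs₂, (deriv_eq_zero_iff_of_two_roots hf hg hs₂).2 (Or.inr rfl),
    fun r hr hr0 => ?_, ?_⟩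
  · exact ((deriv_eq_zero_iff_of_two_roots hf hg hr).1 hr0).resolve_left (hs₁.trans_lt hr).ne'
  refine lt_of_hasDerivAt_pos_of_neg hs₂ (fun x hx => hf x (Ioi_subset_Ici_self hx)) ?_ ?_
  · intro x hx
    have : (x - s₁) * (x - s₂) < 0 :=
      mul_neg_of_pos_of_neg (by linarith [hx.1]) (by linarith [hx.2])
    nlinarith [hg x hx.1]
  · intro x hx
    have : 0 < (x - s₁) * (x - s₂) := mul_pos (by linarith [hx.out]) (by linarith [hx.out])
    nlinarith [hg x (hs₂.trans hx)]

lemma exists_localMin_localMax_of_two_roots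
    (hf : ∀ x ∈ Ici p, HasDerivAt f (-(g x * ((x - s₁) * (x - s₂)))) x)
    (hg : ∀ x ∈ Ioi p, 0 < g x) (hp : p < s₁) (hs : s₁ < s₂) :
    ∃ rmin rmax, p < rmin ∧ rmin < rmax ∧ (∀ r ∈ Ioi p, deriv f r = 0 ↔ r = rmin ∨ r = rmax) ∧
      IsLocalMin f rmin ∧ IsLocalMax f rmax ∧ f rmin < f p := by
  have hd : ∀ x ∈ Ioi p, deriv f x = -(g x * ((x - s₁) * (x - s₂))) :=
    fun x hx => (hf x (Ioi_subset_Ici_self hx)).deriv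
  have hdiff : ∀ s ⊆ Ici p, DifferentiableOn ℝ f s :=
    fun s hs x hx => (hf x (hs hx)).differentiableAt.differentiableWithinAt
  have hneg₁ : ∀ x ∈ Ioo p s₁, deriv f x < 0 := fun x hx => by
    rw [hd x hx.1]
    nlinarith [hg x hx.1, mul_pos_of_neg_of_neg (sub_neg.2 hx.2) (sub_neg.2 (hx.2.trans hs))]
  have hpos : ∀ x ∈ Ioo s₁ s₂, 0 < deriv f x := fun x hx => by
    rw [hd x (hp.trans hx.1)]
    nlinarith [hg x (hp.trans hx.1), mul_neg_of_pos_of_neg (sub_pos.2 hx.1) (sub_neg.2 hx.2)]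
  have hneg₂ : ∀ x ∈ Ioo s₂ (s₂ + 1), deriv f x < 0 := fun x hx => by
    have hpx : p < x := hp.trans (hs.trans hx.1)
    rw [hd x hpx]
    nlinarith [hg x hpx, mul_pos (sub_pos.2 (hs.trans hx.1)) (sub_pos.2 hx.1)]
  refine ⟨s₁, s₂, hp, hs, fun r hr => deriv_eq_zero_iff_of_two_roots hf hg hr, ?_, ?_, ?_⟩
  · exact isLocalMin_of_deriv_Ioo hp hs (hf s₁ hp.le).continuousAt
      (hdiff _ fun x hx => hx.1.le) (hdiff _ fun x hx => (hp.trans hx.1).le)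
      (fun x hx => (hneg₁ x hx).le) fun x hx => (hpos x hx).le
  · exact isLocalMax_of_deriv_Ioo hs (lt_add_one s₂) (hf s₂ (hp.trans hs).le).continuousAt
      (hdiff _ fun x hx => (hp.trans hx.1).le) (hdiff _ fun x hx => (hp.trans (hs.trans hx.1)).le)
      (fun x hx => (hpos x hx).le) fun x hx => (hneg₂ x hx).le
  · refine strictAntiOn_of_deriv_neg (convex_Icc p s₁) (hdiff _ Icc_subset_Ici_self).continuousOn
      ?_ (left_mem_Icc.2 hp.le) (right_mem_Icc.2 hp.le) hp
    rw [interior_Icc]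
    exact hneg₁

end TwoRoots

theorem trichotomy_of_hasDerivAt_eq_neg_mul_sq_add {f g : ℝ → ℝ} {p b c : ℝ}
    (hf : ∀ x ∈ Ici p, HasDerivAt f (-(g x * ((x - b) ^ 2 + c))) x)
    (hg : ∀ x ∈ Ioi p, 0 < g x) :
    StrictAntiOn f (Ioi p) ∨
      (∃ rmax ∈ Ioi p, deriv f rmax = 0 ∧ (∀ r ∈ Ioi p, deriv f r = 0 → r = rmax) ∧
        ∀ r ∈ Ioi p, r ≠ rmax → f r < f rmax) ∨
      (∃ rmin rmax, p < rmin ∧ rmin < rmax ∧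
        (∀ r ∈ Ioi p, deriv f r = 0 ↔ r = rmin ∨ r = rmax) ∧
        IsLocalMin f rmin ∧ IsLocalMax f rmax ∧ f rmin < f p) := by
  have hf' : ∀ x ∈ Ioi p, HasDerivAt f (-(g x * ((x - b) ^ 2 + c))) x :=
    fun x hx => hf x (Ioi_subset_Ici_self hx)
  rcases le_or_gt 0 c with hc | hc
  · refine Or.inl (strictAntiOn_Ioi_of_hasDerivAt_neg_of_ne hf' (b := b) fun x hx hxb => ?_)
    have : 0 < (x - b) ^ 2 := sq_pos_of_ne_zero (sub_ne_zero.2 hxb)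
    nlinarith [hg x hx]
  set d := √(-c)
  have hd : 0 < d := Real.sqrt_pos.2 (neg_pos.2 hc)
  have hfactor : ∀ x, (x - b) ^ 2 + c = (x - (b - d)) * (x - (b + d)) := fun x => by
    linear_combination Real.sq_sqrt (neg_nonneg.2 hc.le)
  simp only [hfactor] at hf hf'
  rcases le_or_gt (b + d) p with h₂ | h₂
  · refine Or.inl (strictAntiOn_Ioi_of_hasDerivAt_neg_of_ne hf' (b := p) fun x hx _ => ?_)
    nlinarith [hg x hx, mul_pos (sub_pos.2 ((by linarith : b - d < p).trans hx))
      (sub_pos.2 (h₂.trans_lt hx))]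
  rcases le_or_gt (b - d) p with h₁ | h₁
  · exact Or.inr (Or.inl (exists_unique_max_of_two_roots hf hg h₁ h₂))
  · exact Or.inr (Or.inr (exists_localMin_localMax_of_two_roots hf hg h₁ (by linarith)))

def kerrCubic (m a ξτ ξφ Λ r : ℝ) : ℝ :=
  Λ ^ 2 * r ^ 3 - 3 * m * (Λ ^ 2 + 2 * a * ξτ * ξφ) * r ^ 2 + a ^ 2 * (Λ ^ 2 - 2 * ξφ ^ 2) * r
    + m * a ^ 2 * (Λ ^ 2 + 2 * a * ξτ * ξφ)

section Kerr

variable {m a ξτ ξφ Λ : ℝ}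

lemma hasDerivAt_kerrV {r : ℝ} (hr : r ^ 2 + a ^ 2 ≠ 0) :
    HasDerivAt (kerrV m a ξτ ξφ Λ) (-2 * kerrCubic m a ξτ ξφ Λ r / (r ^ 2 + a ^ 2) ^ 3) r := by
  have hΔ : HasDerivAt (kerrDelta m a) (2 * r - 2 * m) r :=
    (((hasDerivAt_pow 2 r).sub ((hasDerivAt_id r).const_mul (2 * m))).add_const (a ^ 2)).congr_deriv
      (by simp)
  have hN : HasDerivAt (fun x => kerrDelta m a x * Λ ^ 2 - 4 * a * m * x * ξτ * ξφ - a ^ 2 * ξφ ^ 2)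
      ((2 * r - 2 * m) * Λ ^ 2 - 4 * a * m * ξτ * ξφ) r :=
    (((hΔ.mul_const (Λ ^ 2)).sub (((hasDerivAt_id r).const_mul (4 * a * m)).mul_const ξτ
      |>.mul_const ξφ)).sub_const (a ^ 2 * ξφ ^ 2)).congr_deriv (by simp)
  have hD : HasDerivAt (fun x => (x ^ 2 + a ^ 2) ^ 2) (2 * (r ^ 2 + a ^ 2) * (2 * r)) r :=
    (((hasDerivAt_pow 2 r).add_const (a ^ 2)).pow 2).congr_deriv (by simp)
  refine (hN.div hD (pow_ne_zero 2 hr)).congr_deriv ?_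
  field_simp
  simp only [kerrCubic, kerrDelta]
  ring

lemma kerrCubic_pos (hm : 0 < m) (hma : a ^ 2 ≤ m ^ 2) (hΛ : 0 < Λ) (hΛφ : ξφ ^ 2 ≤ Λ ^ 2)
    (hΛτφ : 2 * |a * ξτ * ξφ| ≤ Λ ^ 2) {r : ℝ} (hr : 7 * m ≤ r) : 0 < kerrCubic m a ξτ ξφ Λ r := by
  have hr0 : 0 < r := by linarith
  have habs := abs_le.1 ((le_div_iff₀' two_pos).2 hΛτφ)
  have hkey : 0 < r ^ 2 - 6 * m * r - a ^ 2 := by nlinarith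
  have hdecomp : kerrCubic m a ξτ ξφ Λ r = Λ ^ 2 * r * (r ^ 2 - 6 * m * r - a ^ 2)
      + 3 * m * r ^ 2 * (Λ ^ 2 - 2 * (a * ξτ * ξφ)) + 2 * a ^ 2 * r * (Λ ^ 2 - ξφ ^ 2)
      + m * a ^ 2 * (Λ ^ 2 + 2 * (a * ξτ * ξφ)) := by
    unfold kerrCubic; ring
  rw [hdecomp]
  have h₁ : 0 ≤ 3 * m * r ^ 2 * (Λ ^ 2 - 2 * (a * ξτ * ξφ)) :=
    mul_nonneg (by positivity) (by linarith)
  have h₂ : 0 ≤ 2 * a ^ 2 * r * (Λ ^ 2 - ξφ ^ 2) := mul_nonneg (by positivity) (by linarith)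
  have h₃ : 0 ≤ m * a ^ 2 * (Λ ^ 2 + 2 * (a * ξτ * ξφ)) := mul_nonneg (by positivity) (by linarith)
  have h₀ : 0 < Λ ^ 2 * r * (r ^ 2 - 6 * m * r - a ^ 2) := by positivity
  linarith

lemma lt_of_deriv_kerrV_eq_zero (hm : 0 < m) (hma : a ^ 2 ≤ m ^ 2) (hΛ : 0 < Λ)
    (hΛφ : ξφ ^ 2 ≤ Λ ^ 2) (hΛτφ : 2 * |a * ξτ * ξφ| ≤ Λ ^ 2) {r : ℝ} (hr : 0 < r)
    (hV : deriv (kerrV m a ξτ ξφ Λ) r = 0) : r < 7 * m := by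
  rw [(hasDerivAt_kerrV (by positivity)).deriv, div_eq_zero_iff] at hV
  by_contra! h
  have := kerrCubic_pos hm hma hΛ hΛφ hΛτφ h
  rcases hV with hV | hV
  · linarith
  · exact absurd hV (by positivity)

lemma kerrCubic_eq_mul_sq_add (hm : 0 ≤ m) (hΛ : 0 < Λ) (hΛτφ : 2 * |a * ξτ * ξφ| ≤ Λ ^ 2) :
    ∃ t ≤ 0, ∃ b c : ℝ, ∀ r, kerrCubic m a ξτ ξφ Λ r = Λ ^ 2 * (r - t) * ((r - b) ^ 2 + c) := by
  have hc₀ : 0 ≤ m * a ^ 2 * (Λ ^ 2 + 2 * a * ξτ * ξφ) :=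
    mul_nonneg (by positivity) (by linarith [neg_abs_le (a * ξτ * ξφ)])
  obtain ⟨t, ht, b, c, h⟩ := exists_cubic_eq_mul_sq_add (c₃ := Λ ^ 2)
    (c₂ := -(3 * m * (Λ ^ 2 + 2 * a * ξτ * ξφ))) (c₁ := a ^ 2 * (Λ ^ 2 - 2 * ξφ ^ 2))
    (by positivity) hc₀
  exact ⟨t, ht, b, c, fun r => by rw [← h r, kerrCubic]; ring⟩

lemma kerrRp_pos (hm : 0 < m) : 0 < kerrRp m a :=
  add_pos_of_pos_of_nonneg hm (Real.sqrt_nonneg _)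

lemma kerrRp_sq_add_sq (hma : a ^ 2 ≤ m ^ 2) : kerrRp m a ^ 2 + a ^ 2 = 2 * m * kerrRp m a := by
  rw [kerrRp]
  linear_combination Real.sq_sqrt (sub_nonneg.2 hma)

-- `ξτ² − k₊²` with `k₊ = ξτ + ω_H ξφ`, `ω_H = a / (2 m r₊)`.
lemma kerrV_kerrRp (hm : 0 < m) (hma : a ^ 2 ≤ m ^ 2) :
    kerrV m a ξτ ξφ Λ (kerrRp m a) = ξτ ^ 2 - (ξτ + a / (2 * m * kerrRp m a) * ξφ) ^ 2 := by
  have hrp := kerrRp_pos (a := a) hm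
  have hΔ : kerrDelta m a (kerrRp m a) = 0 := by
    rw [kerrDelta]; linear_combination kerrRp_sq_add_sq hma
  rw [kerrV, hΔ, kerrRp_sq_add_sq hma]
  field_simp
  ring

end Kerr

/-- Trichotomy for the Kerr frequency potential (Lemma 6.1): for an admissible frequency
triple with `Λ > 0`, the potential `V` on `(r₊, ∞)` is either strictly decreasing, or has a
unique critical point which is a global maximum, or has exactly two critical points
`r_min < r_max` which are respectively a local minimum and a local maximum; moreover every
critical point which is a local maximum lies in `(r₊, 8m]`, and in the third case
`ξτ² > V(r_min)`. -/
theorem kerr_potential_trichotomy (m a ξτ ξφ Λ : ℝ)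
    (hm : 0 < m) (ha0 : 0 ≤ a) (ham : a < m)
    (hΛpos : 0 < Λ) (hΛφ : ξφ ^ 2 ≤ Λ ^ 2) (hΛτφ : 2 * |a * ξτ * ξφ| ≤ Λ ^ 2) :
    (StrictAntiOn (kerrV m a ξτ ξφ Λ) (Set.Ioi (kerrRp m a)) ∨
      (∃ rmax ∈ Set.Ioi (kerrRp m a),
        deriv (kerrV m a ξτ ξφ Λ) rmax = 0 ∧
        (∀ r ∈ Set.Ioi (kerrRp m a), deriv (kerrV m a ξτ ξφ Λ) r = 0 → r = rmax) ∧
        (∀ r ∈ Set.Ioi (kerrRp m a), r ≠ rmax →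
          kerrV m a ξτ ξφ Λ r < kerrV m a ξτ ξφ Λ rmax)) ∨
      (∃ rmin rmax : ℝ, kerrRp m a < rmin ∧ rmin < rmax ∧
        (∀ r ∈ Set.Ioi (kerrRp m a),
          deriv (kerrV m a ξτ ξφ Λ) r = 0 ↔ (r = rmin ∨ r = rmax)) ∧
        IsLocalMin (kerrV m a ξτ ξφ Λ) rmin ∧ IsLocalMax (kerrV m a ξτ ξφ Λ) rmax ∧
        kerrV m a ξτ ξφ Λ rmin < ξτ ^ 2)) ∧
    (∀ r ∈ Set.Ioi (kerrRp m a), deriv (kerrV m a ξτ ξφ Λ) r = 0 →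
      IsLocalMax (kerrV m a ξτ ξφ Λ) r → r ≤ 8 * m) := by
  have hma : a ^ 2 ≤ m ^ 2 := pow_le_pow_left₀ ha0 ham.le 2
  have hrp := kerrRp_pos (a := a) hm
  have hden : ∀ r ∈ Ici (kerrRp m a), 0 < r ^ 2 + a ^ 2 :=
    fun r hr => add_pos_of_pos_of_nonneg (pow_pos (hrp.trans_le hr) 2) (sq_nonneg a)
  obtain ⟨t, ht, b, c, hQ⟩ := kerrCubic_eq_mul_sq_add (ξτ := ξτ) hm.le hΛpos hΛτφ
  have hV : ∀ r ∈ Ici (kerrRp m a), HasDerivAt (kerrV m a ξτ ξφ Λ)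
      (-(2 * Λ ^ 2 * (r - t) / (r ^ 2 + a ^ 2) ^ 3 * ((r - b) ^ 2 + c))) r := fun r hr =>
    (hasDerivAt_kerrV (hden r hr).ne').congr_deriv (by rw [hQ]; ring)
  have hg : ∀ r ∈ Ioi (kerrRp m a), 0 < 2 * Λ ^ 2 * (r - t) / (r ^ 2 + a ^ 2) ^ 3 :=
    fun r hr => div_pos (mul_pos (by positivity) (by linarith [hr.out]))
      (pow_pos (hden r (Ioi_subset_Ici_self hr)) 3)
  refine ⟨?_, fun r hr hr0 _ => (lt_of_deriv_kerrV_eq_zero hm hma hΛpos hΛφ hΛτφ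
    (hrp.trans hr) hr0).le.trans (by linarith)⟩
  have hVrp : kerrV m a ξτ ξφ Λ (kerrRp m a) ≤ ξτ ^ 2 :=
    (kerrV_kerrRp hm hma).trans_le (sub_le_self _ (sq_nonneg _))
  rcases trichotomy_of_hasDerivAt_eq_neg_mul_sq_add hV hg with
    hanti | hmax | ⟨rmin, rmax, hp, hlt, hcrit, hmin, hmax, hVmin⟩
  · exact Or.inl hanti
  · exact Or.inr (Or.inl hmax)
  · exact Or.inr (Or.inr ⟨rmin, rmax, hp, hlt, hcrit, hmin, hmax, hVmin.trans_le hVrp⟩)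
end
end

section
/- (No critical points of the potential beyond r = 8m.) Let (ξ_τ, ξ_φ, Λ) be an admissible triple with Λ > 0. Then for every r ≥ 8m one has −2(r³ − 3mr² + a²r + a²m)Λ² + 4a²r ξ_φ² + 4am(3r² − a²) ξ_τ ξ_φ < 0. Since this expression equals (r² + a²)³ V′(r), it follows that V′(r) < 0 for all r ≥ 8m, so V has no critical points in [8m, ∞). -/
open Real Set

noncomputable section

/-- No critical points of the Kerr frequency potential beyond `r = 8m`: for an admissible
triple with `Λ > 0` and any `r ≥ 8m`, the polynomial
`−2(r³−3mr²+a²r+a²m)Λ² + 4a²r ξφ² + 4am(3r²−a²) ξτ ξφ` is negative; since it equals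
`(r²+a²)³ V′(r)`, one has `V′(r) < 0` for all `r ≥ 8m`. -/
theorem kerr_potential_no_critical_beyond_8m (m a ξτ ξφ Λ : ℝ)
    (hm : 0 < m) (ha0 : 0 ≤ a) (ham : a < m)
    (hΛpos : 0 < Λ) (hΛφ : ξφ ^ 2 ≤ Λ ^ 2) (hΛτφ : 2 * |a * ξτ * ξφ| ≤ Λ ^ 2) :
    ∀ r : ℝ, 8 * m ≤ r →
      (-2 * (r ^ 3 - 3 * m * r ^ 2 + a ^ 2 * r + a ^ 2 * m) * Λ ^ 2
          + 4 * a ^ 2 * r * ξφ ^ 2 + 4 * a * m * (3 * r ^ 2 - a ^ 2) * ξτ * ξφ < 0) ∧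
      ((r ^ 2 + a ^ 2) ^ 3 * deriv (kerrV m a ξτ ξφ Λ) r
          = -2 * (r ^ 3 - 3 * m * r ^ 2 + a ^ 2 * r + a ^ 2 * m) * Λ ^ 2
            + 4 * a ^ 2 * r * ξφ ^ 2 + 4 * a * m * (3 * r ^ 2 - a ^ 2) * ξτ * ξφ) ∧
      deriv (kerrV m a ξτ ξφ Λ) r < 0 := by
  intro r hr
  have hrpos : 0 < r := lt_of_lt_of_le (by linarith) hr
  have ha2 : a ^ 2 < m ^ 2 := by nlinarith
  have habs : a * ξτ * ξφ ≤ |a * ξτ * ξφ| := le_abs_self _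
  have habs' : -(a * ξτ * ξφ) ≤ |a * ξτ * ξφ| := neg_le_abs _
  have h3r : 0 ≤ 3 * r ^ 2 - a ^ 2 := by nlinarith
  -- Part 1: the inequality
  have hineq : -2 * (r ^ 3 - 3 * m * r ^ 2 + a ^ 2 * r + a ^ 2 * m) * Λ ^ 2
      + 4 * a ^ 2 * r * ξφ ^ 2 + 4 * a * m * (3 * r ^ 2 - a ^ 2) * ξτ * ξφ < 0 := by
    have h1 : 4 * a ^ 2 * r * ξφ ^ 2 ≤ 4 * a ^ 2 * r * Λ ^ 2 :=
      mul_le_mul_of_nonneg_left hΛφ (by positivity)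
    have h2 : 4 * a * m * (3 * r ^ 2 - a ^ 2) * ξτ * ξφ ≤ 2 * m * (3 * r ^ 2 - a ^ 2) * Λ ^ 2 := by
      have hb := mul_le_mul_of_nonneg_left hΛτφ
        (by positivity : (0:ℝ) ≤ m * (3 * r ^ 2 - a ^ 2))
      have hc := mul_le_mul_of_nonneg_left habs
        (by positivity : (0:ℝ) ≤ 2 * m * (3 * r ^ 2 - a ^ 2))
      nlinarith [hb, hc]
    have hpoly : -2 * (r ^ 3 - 3 * m * r ^ 2 + a ^ 2 * r + a ^ 2 * m)
        + 4 * a ^ 2 * r + 2 * m * (3 * r ^ 2 - a ^ 2) < 0 := by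
      nlinarith [mul_pos hm hrpos, mul_pos (mul_pos hm hrpos) hrpos, sq_nonneg r,
        mul_pos hrpos hrpos, mul_lt_mul_of_pos_right ha2 hrpos,
        mul_le_mul_of_nonneg_left hr hrpos.le]
    have hmul := mul_neg_of_pos_of_neg (pow_pos hΛpos 2) hpoly
    nlinarith [hmul, h1, h2]
  -- derivative computation
  have hden : (r ^ 2 + a ^ 2) ≠ 0 := by positivity
  have hden2 : ((r ^ 2 + a ^ 2) ^ 2) ≠ 0 := by positivity
  have hD : HasDerivAt (fun x : ℝ => (x ^ 2 + a ^ 2) ^ 2)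
      (2 * (r ^ 2 + a ^ 2) ^ 1 * (2 * r ^ 1)) r := by
    exact ((hasDerivAt_pow 2 r).add_const (a ^ 2)).pow 2
  have hN : HasDerivAt
      (fun x : ℝ => kerrDelta m a x * Λ ^ 2 - 4 * a * m * x * ξτ * ξφ - a ^ 2 * ξφ ^ 2)
      ((2 * r ^ 1 - 2 * m * 1) * Λ ^ 2 - 4 * a * m * 1 * ξτ * ξφ) r := by
    have h1 : HasDerivAt (fun x : ℝ => x ^ 2 - 2 * m * x + a ^ 2) (2 * r ^ 1 - 2 * m * 1) r :=
      ((hasDerivAt_pow 2 r).sub ((hasDerivAt_id r).const_mul (2 * m))).add_const (a ^ 2)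
    have h2 : HasDerivAt (fun x : ℝ => 4 * a * m * x * ξτ * ξφ) (4 * a * m * 1 * ξτ * ξφ) r :=
      (((hasDerivAt_id r).const_mul (4 * a * m)).mul_const ξτ).mul_const ξφ
    exact ((h1.mul_const (Λ ^ 2)).sub h2).sub_const (a ^ 2 * ξφ ^ 2)
  have hV : HasDerivAt (kerrV m a ξτ ξφ Λ)
      ((((2 * r ^ 1 - 2 * m * 1) * Λ ^ 2 - 4 * a * m * 1 * ξτ * ξφ) * (r ^ 2 + a ^ 2) ^ 2 -
          (kerrDelta m a r * Λ ^ 2 - 4 * a * m * r * ξτ * ξφ - a ^ 2 * ξφ ^ 2) *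
            (2 * (r ^ 2 + a ^ 2) ^ 1 * (2 * r ^ 1))) / ((r ^ 2 + a ^ 2) ^ 2) ^ 2) r :=
    hN.div hD hden2
  have hderiv := hV.deriv
  have heq : (r ^ 2 + a ^ 2) ^ 3 * deriv (kerrV m a ξτ ξφ Λ) r
      = -2 * (r ^ 3 - 3 * m * r ^ 2 + a ^ 2 * r + a ^ 2 * m) * Λ ^ 2
        + 4 * a ^ 2 * r * ξφ ^ 2 + 4 * a * m * (3 * r ^ 2 - a ^ 2) * ξτ * ξφ := by
    rw [hderiv]
    unfold kerrDelta
    field_simp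
    ring
  refine ⟨hineq, heq, ?_⟩
  have hcube : 0 < (r ^ 2 + a ^ 2) ^ 3 := by positivity
  nlinarith [heq, hineq, hcube, mul_pos hcube hcube]
end
end

section
/- (Determinant of the Kerr metric in Boyer–Lindquist coordinates.) The 4×4 matrix g defined in the context satisfies det g = −|q|⁴ sin²θ. In particular |det g| = |q|⁴ sin²θ. -/
open Real

/-! The metric only couples `t` with `φ`, so `det g = g_rr · g_θθ · (g_tt g_φφ − g_tφ²)`.
Writing `2mr = r² + a² − Δ`, the `t`–`φ` minor collapses to `−Δ sin²θ`, because with `s = sin θ`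
`(Δ − a² s²)((r² + a²)² − a² s² Δ) + a² s² (r² + a² − Δ)² = Δ (r² + a² − a² s²)²`
and `r² + a² − a² sin²θ = |q|²`. The factor `Δ` then cancels against `g_rr = |q|²/Δ`. -/

theorem Matrix.det_fin_four_of_outer_block_inner_diagonal {R : Type*} [CommRing R]
    (a b c d e f : R) :
    !![a, 0, 0, b; 0, c, 0, 0; 0, 0, d, 0; e, 0, 0, f].det = c * d * (a * f - b * e) := by
  simp [Matrix.det_succ_row_zero, Fin.sum_univ_succ, Fin.succAbove]
  ring

theorem kerr_tphi_minor {K : Type*} [Field K] {m a r s q Δ Sigma2 : K}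
    (hq : q = r ^ 2 + a ^ 2 - a ^ 2 * s ^ 2) (hΔ : Δ = r ^ 2 - 2 * m * r + a ^ 2)
    (hSigma : Sigma2 = (r ^ 2 + a ^ 2) ^ 2 - a ^ 2 * s ^ 2 * Δ) (hq0 : q ≠ 0) :
    -((Δ - a ^ 2 * s ^ 2) / q) * (Sigma2 * s ^ 2 / q) -
      2 * a * m * r * s ^ 2 / q * (2 * a * m * r * s ^ 2 / q) = -(Δ * s ^ 2) := by
  have hnum : (Δ - a ^ 2 * s ^ 2) * Sigma2 + (2 * a * m * r) ^ 2 * s ^ 2 = Δ * q ^ 2 := by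
    subst hq hΔ hSigma
    ring
  calc _ = -(s ^ 2 * ((Δ - a ^ 2 * s ^ 2) * Sigma2 + (2 * a * m * r) ^ 2 * s ^ 2)) / q ^ 2 := by
        ring
    _ = -(Δ * s ^ 2) := by
        rw [hnum]
        field_simp

theorem kerr_BL_determinant_general (m a r θ q2 Δ Sigma2 : ℝ)
    (hq2 : q2 = r ^ 2 + a ^ 2 * Real.cos θ ^ 2)
    (hΔ : Δ = r ^ 2 - 2 * m * r + a ^ 2)
    (hSigma : Sigma2 = (r ^ 2 + a ^ 2) ^ 2 - a ^ 2 * Real.sin θ ^ 2 * Δ)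
    (hΔ0 : Δ ≠ 0) (hq0 : q2 ≠ 0)
    (g : Matrix (Fin 4) (Fin 4) ℝ)
    (hg : g = !![
      -((Δ - a ^ 2 * Real.sin θ ^ 2) / q2), 0, 0,
        -(2 * a * m * r * Real.sin θ ^ 2 / q2);
      0, q2 / Δ, 0, 0;
      0, 0, q2, 0;
      -(2 * a * m * r * Real.sin θ ^ 2 / q2), 0, 0,
        Sigma2 * Real.sin θ ^ 2 / q2]) :
    g.det = -(q2 ^ 2 * Real.sin θ ^ 2) ∧ |g.det| = q2 ^ 2 * Real.sin θ ^ 2 := by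
  have hq : q2 = r ^ 2 + a ^ 2 - a ^ 2 * Real.sin θ ^ 2 := by
    rw [hq2, cos_sq']
    ring
  have hdet : g.det = -(q2 ^ 2 * Real.sin θ ^ 2) := by
    rw [hg, Matrix.det_fin_four_of_outer_block_inner_diagonal, neg_mul_neg,
      kerr_tphi_minor hq hΔ hSigma hq0]
    field_simp
  exact ⟨hdet, by rw [hdet, abs_neg, abs_of_nonneg (by positivity)]⟩

/-- Determinant of the Kerr metric in Boyer–Lindquist coordinates:
`det g = −|q|⁴ sin²θ`, so `|det g| = |q|⁴ sin²θ`. -/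
theorem kerr_BL_determinant (m a r θ q2 Δ Sigma2 : ℝ)
    (hq2 : q2 = r ^ 2 + a ^ 2 * Real.cos θ ^ 2)
    (hΔ : Δ = r ^ 2 - 2 * m * r + a ^ 2)
    (hSigma : Sigma2 = (r ^ 2 + a ^ 2) ^ 2 - a ^ 2 * Real.sin θ ^ 2 * Δ)
    (hΔ0 : Δ ≠ 0) (hs : Real.sin θ ≠ 0) (hq0 : q2 ≠ 0)
    (g : Matrix (Fin 4) (Fin 4) ℝ)
    (hg : g = !![
      -((Δ - a ^ 2 * Real.sin θ ^ 2) / q2), 0, 0,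
        -(2 * a * m * r * Real.sin θ ^ 2 / q2);
      0, q2 / Δ, 0, 0;
      0, 0, q2, 0;
      -(2 * a * m * r * Real.sin θ ^ 2 / q2), 0, 0,
        Sigma2 * Real.sin θ ^ 2 / q2]) :
    g.det = -(q2 ^ 2 * Real.sin θ ^ 2) ∧ |g.det| = q2 ^ 2 * Real.sin θ ^ 2 :=
  kerr_BL_determinant_general m a r θ q2 Δ Sigma2 hq2 hΔ hSigma hΔ0 hq0 g hg
end
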